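/- Two-round weak graded agreement. Assume n > 3t and each node v has an input (x_v, s_v) ∈ 𝒱 × {0,1}. The protocol prescribes: in round 1, a correct node w sends x_w to all nodes if s_w = 1 and otherwise sends nothing; in round 2, a correct node w with s_w = 1 sends x_w to all nodes if the number of round-1 messages it received carrying a value different from x_w is at most t, and otherwise sends the special message NACK to all nodes; a correct node with s_w = 0 sends nothing in round 2. After round 2, each correct node v outputs (y_v, g_v) ∈ 𝒱 × {0,1} determined as follows: if the number of round-2 messages v received that differ from x_v (i.e., that are NACK or carry a value different from x_v) is at most t, then (y_v, g_v) = (x_v, 1); otherwise, if some value x ∈ 𝒱 was received by v from at least t + 1 nodes in round 2, then g_v = 0 and y_v is some such value; otherwise (y_v, g_v) = (x_v, 0). Then in every execution: (Validity) if there is x ∈ 𝒱 with x_v = x for all v ∈ H, then (y_v, g_v) = (x, 1) for every v ∈ H; and (Weak Graded Agreement) if s_v = 1 for all v ∈ H and g_w = 1 for some w ∈ H, then y_v = y_w for every v ∈ H. -/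

import Mathlib

/-!
Validity: when all correct inputs equal `c`, only the at most `t` faulty nodes ever send anything
but `c`, in either round.

Agreement: if a correct node `w` outputs grade 1, at most `t` round-2 messages it received differ
from `x_w`. Every correct node speaks in round 2 (all `s = 1`) and sends the same message to
everybody, and there are more than `2t` correct nodes, so more than `t` correct nodes echo `x_w`
to everyone. Each of them has input `x_w`, so a correct node with another input sees more than `t`
deviating round-1 values and sends NACK. Hence no value other than `x_w` reaches any node more
than `t` times, while `x_w` reaches every node more than `t` times, which pins every correct
output to `x_w`.
-/
/-- Round-2 messages: either a value of `𝒱` or the special message `NACK`. -/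
abbrev Msg2 (𝒱 : Type*) := 𝒱 ⊕ Unit

/-- The special `NACK` message. -/
def NACK {𝒱 : Type*} : Msg2 𝒱 := Sum.inr ()

open Finset

namespace GradedAgreement

section Counting

variable {α β : Type*} [Fintype α] [DecidableEq β]

def numDiffering (r : α → Option β) (m : β) : ℕ :=
  (univ.filter fun u => r u ≠ none ∧ r u ≠ some m).card

def numReceived (r : α → Option β) (m : β) : ℕ :=
  (univ.filter fun u => r u = some m).card

theorem numReceived_le_numDiffering {r : α → Option β} {m m' : β} (h : m ≠ m') :
    numReceived r m ≤ numDiffering r m' :=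
  card_le_card fun u hu => by
    simp only [mem_filter, mem_univ, true_and] at hu ⊢
    simp [hu, h]

variable [DecidableEq α] {H : Finset α} {t : ℕ}

theorem card_filter_le_of_forall_mem_not (hH : (univ \ H).card ≤ t) {p : α → Prop}
    [DecidablePred p] (h : ∀ u ∈ H, ¬ p u) : (univ.filter p).card ≤ t :=
  (card_le_card fun u hu =>
    mem_sdiff.2 ⟨mem_univ u, fun huH => h u huH (mem_filter.1 hu).2⟩).trans hH

theorem lt_card_filter_of_card_filter_not_le (hnt : 3 * t < Fintype.card α)
    (hH : (univ \ H).card ≤ t) {p : α → Prop} [DecidablePred p]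
    (h : (H.filter fun u => ¬ p u).card ≤ t) : t < (H.filter p).card := by
  rw [← compl_eq_univ_sdiff, card_compl] at hH
  have := card_filter_add_card_filter_not (s := H) p
  omega

end Counting

section Rules

variable {α 𝒱 : Type*} [Fintype α] [DecidableEq 𝒱] {t : ℕ}

def round2Msg (t : ℕ) (r : α → Option 𝒱) (xw : 𝒱) (sw : Fin 2) : Option (Msg2 𝒱) :=
  if sw = 1 then (if numDiffering r xw ≤ t then some (Sum.inl xw) else some NACK) else none

theorem round2Msg_ne_none {r : α → Option 𝒱} {xw : 𝒱} {sw : Fin 2} (hs : sw = 1) :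
    round2Msg t r xw sw ≠ none := by
  unfold round2Msg
  split_ifs <;> simp

theorem round2Msg_of_numDiffering_le {r : α → Option 𝒱} {xw : 𝒱} (sw : Fin 2)
    (h : numDiffering r xw ≤ t) :
    round2Msg t r xw sw = if sw = 1 then some (Sum.inl xw) else none := by
  simp [round2Msg, h]

theorem eq_and_numDiffering_le_of_round2Msg_eq_inl {r : α → Option 𝒱} {xw c : 𝒱} {sw : Fin 2}
    (h : round2Msg t r xw sw = some (Sum.inl c)) : c = xw ∧ numDiffering r xw ≤ t := by
  unfold round2Msg at h
  split_ifs at h with hs hd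
  · exact ⟨(Sum.inl_injective (Option.some_injective _ h)).symm, hd⟩
  all_goals simp [NACK] at h

def OutputRule (t : ℕ) (r : α → Option (Msg2 𝒱)) (xv yv : 𝒱) (gv : Fin 2) : Prop :=
  (numDiffering r (Sum.inl xv) ≤ t → yv = xv ∧ gv = 1) ∧
  (¬ numDiffering r (Sum.inl xv) ≤ t → (∃ c : 𝒱, t + 1 ≤ numReceived r (Sum.inl c)) →
    gv = 0 ∧ t + 1 ≤ numReceived r (Sum.inl yv)) ∧
  (¬ numDiffering r (Sum.inl xv) ≤ t → ¬ (∃ c : 𝒱, t + 1 ≤ numReceived r (Sum.inl c)) →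
    yv = xv ∧ gv = 0)

namespace OutputRule

variable {r : α → Option (Msg2 𝒱)} {xv yv : 𝒱} {gv : Fin 2}

theorem numDiffering_le_of_grade_eq_one (ho : OutputRule t r xv yv gv) (hg : gv = 1) :
    numDiffering r (Sum.inl xv) ≤ t := by
  by_contra hd
  by_cases hq : ∃ c : 𝒱, t + 1 ≤ numReceived r (Sum.inl c)
  · exact absurd ((ho.2.1 hd hq).1.symm.trans hg) (by decide)
  · exact absurd ((ho.2.2 hd hq).2.symm.trans hg) (by decide)

theorem eq_of_unique_quorum (ho : OutputRule t r xv yv gv) {c : 𝒱}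
    (hc : t < numReceived r (Sum.inl c))
    (huniq : ∀ c' ≠ c, numReceived r (Sum.inl c') ≤ t) : yv = c := by
  by_cases hd : numDiffering r (Sum.inl xv) ≤ t
  · rw [(ho.1 hd).1]
    by_contra hne
    have := numReceived_le_numDiffering (r := r) (Sum.inl_injective.ne (Ne.symm hne))
    omega
  · by_contra hne
    have := (ho.2.1 hd ⟨c, hc⟩).2
    have := huniq yv hne
    omega

end OutputRule

end Rules

section Protocol

variable {α 𝒱 : Type*} [Fintype α] [DecidableEq 𝒱] {t : ℕ} {H : Finset α}
  {x : α → 𝒱} {s : α → Fin 2} {recv1 : α → α → Option 𝒱} {recv2 : α → α → Option (Msg2 𝒱)}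

theorem numDiffering_round1_le_of_forall_input_eq [DecidableEq α] (hH : (univ \ H).card ≤ t)
    (h1 : ∀ v, ∀ w ∈ H, recv1 v w = if s w = 1 then some (x w) else none)
    {c : 𝒱} (hc : ∀ u ∈ H, x u = c) (v : α) : numDiffering (recv1 v) c ≤ t :=
  card_filter_le_of_forall_mem_not hH fun u hu => by
    rw [h1 v u hu, hc u hu]
    split_ifs <;> simp

theorem numDiffering_round2_le_of_forall_input_eq [DecidableEq α] (hH : (univ \ H).card ≤ t)
    (h1 : ∀ v, ∀ w ∈ H, recv1 v w = if s w = 1 then some (x w) else none)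
    (h2 : ∀ v, ∀ w ∈ H, recv2 v w = round2Msg t (recv1 w) (x w) (s w))
    {c : 𝒱} (hc : ∀ u ∈ H, x u = c) (v : α) : numDiffering (recv2 v) (Sum.inl c) ≤ t :=
  card_filter_le_of_forall_mem_not hH fun u hu => by
    have hd := numDiffering_round1_le_of_forall_input_eq hH h1 hc u
    rw [← hc u hu] at hd
    rw [h2 v u hu, round2Msg_of_numDiffering_le _ hd, hc u hu]
    split_ifs <;> simp

theorem lt_card_echo_of_numDiffering_le [DecidableEq α] (hnt : 3 * t < Fintype.card α)
    (hH : (univ \ H).card ≤ t)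
    (h2 : ∀ v, ∀ w ∈ H, recv2 v w = round2Msg t (recv1 w) (x w) (s w))
    (hs : ∀ u ∈ H, s u = 1) {w : α} {c : 𝒱} (hw : numDiffering (recv2 w) (Sum.inl c) ≤ t) :
    t < (H.filter fun u => recv2 w u = some (Sum.inl c)).card := by
  refine lt_card_filter_of_card_filter_not_le hnt hH ((card_le_card fun u hu => ?_).trans hw)
  rw [mem_filter] at hu ⊢
  exact ⟨mem_univ u, h2 w u hu.1 ▸ round2Msg_ne_none (hs u hu.1), hu.2⟩

theorem lt_numReceived_of_lt_card_echo
    (h2 : ∀ v, ∀ w ∈ H, recv2 v w = round2Msg t (recv1 w) (x w) (s w))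
    {w : α} {m : Msg2 𝒱} (he : t < (H.filter fun u => recv2 w u = some m).card) (z : α) :
    t < numReceived (recv2 z) m := by
  refine he.trans_le (card_le_card fun u hu => ?_)
  rw [mem_filter] at hu ⊢
  exact ⟨mem_univ u, by rw [h2 z u hu.1, ← h2 w u hu.1, hu.2]⟩

theorem lt_card_input_eq_of_lt_card_echo
    (h2 : ∀ v, ∀ w ∈ H, recv2 v w = round2Msg t (recv1 w) (x w) (s w))
    {w : α} {c : 𝒱} (he : t < (H.filter fun u => recv2 w u = some (Sum.inl c)).card) :
    t < (H.filter fun u => x u = c).card := by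
  refine he.trans_le (card_le_card fun u hu => ?_)
  obtain ⟨huH, hmsg⟩ := mem_filter.1 hu
  rw [h2 w u huH] at hmsg
  exact mem_filter.2 ⟨huH, (eq_and_numDiffering_le_of_round2Msg_eq_inl hmsg).1.symm⟩

/-- A correct node whose input is not `c` hears `c` from the more than `t` correct holders of `c`
in round 1, so it sends NACK rather than its own value. -/
theorem eq_of_round2_eq_inl
    (h1 : ∀ v, ∀ w ∈ H, recv1 v w = if s w = 1 then some (x w) else none)
    (h2 : ∀ v, ∀ w ∈ H, recv2 v w = round2Msg t (recv1 w) (x w) (s w))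
    (hs : ∀ u ∈ H, s u = 1) {c c' : 𝒱} (hsupp : t < (H.filter fun u => x u = c).card)
    {u z : α} (hu : u ∈ H) (hmsg : recv2 z u = some (Sum.inl c')) : c' = c := by
  rw [h2 z u hu] at hmsg
  obtain ⟨rfl, hd⟩ := eq_and_numDiffering_le_of_round2Msg_eq_inl hmsg
  by_contra hne
  have hle : (H.filter fun u => x u = c).card ≤ numDiffering (recv1 u) (x u) :=
    card_le_card fun v hv => by
      rw [mem_filter] at hv ⊢
      rw [h1 u v hv.1, if_pos (hs v hv.1), hv.2]
      exact ⟨mem_univ v, by simp, by simpa using Ne.symm hne⟩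
  omega

end Protocol

end GradedAgreement

open GradedAgreement in
theorem weak_graded_agreement_two_rounds
    {n t : ℕ} {𝒱 : Type*} [DecidableEq 𝒱]
    (hnt : 3 * t < n)
    (H : Finset (Fin n)) (hH : (Finset.univ \ H).card ≤ t)
    (x : Fin n → 𝒱) (s : Fin n → Fin 2)
    (recv1 : Fin n → Fin n → Option 𝒱)
    (recv2 : Fin n → Fin n → Option (Msg2 𝒱))
    -- round 1: a correct node sends its input to all nodes iff s = 1
    (h1 : ∀ v : Fin n, ∀ w ∈ H, recv1 v w = if s w = 1 then some (x w) else none)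
    -- round 2: a correct node with s = 1 repeats its input if at most t received
    -- round-1 messages carried a different value, and otherwise sends NACK;
    -- a correct node with s = 0 stays silent
    (h2 : ∀ v : Fin n, ∀ w ∈ H, recv2 v w =
      if s w = 1 then
        (if (Finset.univ.filter fun u =>
              recv1 w u ≠ none ∧ recv1 w u ≠ some (x w)).card ≤ t
         then some (Sum.inl (x w)) else some NACK)
      else none)
    (y : Fin n → 𝒱) (g : Fin n → Fin 2)
    -- output rule at correct nodes
    (hout : ∀ v ∈ H,
      ((Finset.univ.filter fun u =>
          recv2 v u ≠ none ∧ recv2 v u ≠ some (Sum.inl (x v))).card ≤ t →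
        y v = x v ∧ g v = 1) ∧
      (¬ (Finset.univ.filter fun u =>
          recv2 v u ≠ none ∧ recv2 v u ≠ some (Sum.inl (x v))).card ≤ t →
        (∃ c : 𝒱, t + 1 ≤
            (Finset.univ.filter fun u => recv2 v u = some (Sum.inl c)).card) →
          g v = 0 ∧ t + 1 ≤
            (Finset.univ.filter fun u => recv2 v u = some (Sum.inl (y v))).card) ∧
      (¬ (Finset.univ.filter fun u =>
          recv2 v u ≠ none ∧ recv2 v u ≠ some (Sum.inl (x v))).card ≤ t →
        ¬ (∃ c : 𝒱, t + 1 ≤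
            (Finset.univ.filter fun u => recv2 v u = some (Sum.inl c)).card) →
          y v = x v ∧ g v = 0)) :
    -- Validity
    (∀ c : 𝒱, (∀ v ∈ H, x v = c) → ∀ v ∈ H, y v = c ∧ g v = 1) ∧
    -- Weak Graded Agreement
    ((∀ v ∈ H, s v = 1) → ∀ w ∈ H, g w = 1 → ∀ v ∈ H, y v = y w) := by
  have h2' : ∀ v, ∀ w ∈ H, recv2 v w = round2Msg t (recv1 w) (x w) (s w) := h2
  have hout' : ∀ v ∈ H, OutputRule t (recv2 v) (x v) (y v) (g v) := hout
  refine ⟨fun c hc v hv => ?_, fun hs w hw hgw v hv => ?_⟩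
  · obtain ⟨hy, hg⟩ := (hout' v hv).1 <| by
      simpa only [hc v hv] using numDiffering_round2_le_of_forall_input_eq hH h1 h2' hc v
    exact ⟨hy.trans (hc v hv), hg⟩
  · have hdw := (hout' w hw).numDiffering_le_of_grade_eq_one hgw
    have hecho := lt_card_echo_of_numDiffering_le (by rwa [Fintype.card_fin]) hH h2' hs hdw
    have hsupp := lt_card_input_eq_of_lt_card_echo h2' hecho
    rw [((hout' w hw).1 hdw).1]
    refine (hout' v hv).eq_of_unique_quorum (lt_numReceived_of_lt_card_echo h2' hecho v) ?_
    exact fun c' hc' => card_filter_le_of_forall_mem_not hH fun u hu hmsg =>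
      hc' (eq_of_round2_eq_inl h1 h2' hs hsupp hu hmsg)
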